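/- arXiv:0804.1382 — 6 statements merged into one kernel-verified Lean document; each statement's English description precedes it below -/
import Mathlib

section
/- Let 0 < a < 1 and P2 ≥ 0 be real numbers. Then the function P1 ↦ R_s(a, P1, P2) is monotone nondecreasing on [0, ∞); in particular, when a < 1 the transmitter maximizes the achievable secrecy rate by using full power. -/
/-- `g x = (1/2) * log₂ (1 + x)` -/
noncomputable def g (x : ℝ) : ℝ := (1/2) * Real.logb 2 (1 + x)

/-- Achievable secrecy rate of the symmetric Gaussian wiretap channel
with a helping interferer. -/
noncomputable def Rs (a P1 P2 : ℝ) : ℝ :=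
  if 1 + P2 ≤ a then 0
  else if 1 ≤ a then
    if P1 < P2 ∧ 1 + P1 < a then g P1 - g (a * P1 / (1 + P2))
    else if P1 < P2 ∧ a ≤ 1 + P1 then g (P1 + a * P2) - g (a * P1 + P2)
    else 0
  else
    if P2 < P1 then g (P1 / (1 + a * P2)) - g (a * P1 / (1 + P2))
    else g P1 - g (a * P1)

/-! Since `g u - g v = ½ log₂ ((1 + u) / (1 + v))`, each branch of `Rs a · P2` for `a < 1`
is `x ↦ g (b x) - g (c x)` with `0 ≤ c ≤ b`, whose ratio `(1 + b x) / (1 + c x)` increases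
in `x`. The low-power branch has `b = 1, c = a`, the high-power one
`b = 1 / (1 + a P2), c = a / (1 + P2)`, and `c ≤ b` there amounts to `a (1 + a P2) ≤ 1 + P2`.
At the switching power `P1 = P2` both ratios equal `(1 + P2) / (1 + a P2)`, so the branches
glue to a monotone function. -/

open Set

lemma g_sub_g {u v : ℝ} (hu : 0 < 1 + u) (hv : 0 < 1 + v) :
    g u - g v = 1 / 2 * Real.logb 2 ((1 + u) / (1 + v)) := by
  rw [g, g, ← mul_sub, Real.logb_div hu.ne' hv.ne']

lemma g_mul_sub_g_mul_monotoneOn {b c : ℝ} (hc : 0 ≤ c) (hcb : c ≤ b) :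
    MonotoneOn (fun x => g (b * x) - g (c * x)) (Ici 0) := by
  intro x hx y hy hxy
  simp only [mem_Ici] at hx hy
  have hb : 0 ≤ b := hc.trans hcb
  simp only [g_sub_g (by positivity : 0 < 1 + b * x) (by positivity : 0 < 1 + c * x),
    g_sub_g (by positivity : 0 < 1 + b * y) (by positivity : 0 < 1 + c * y)]
  gcongr 1 / 2 * ?_
  refine Real.logb_le_logb_of_le one_lt_two (by positivity) ?_
  rw [div_le_div_iff₀ (by positivity) (by positivity)]
  nlinarith [mul_nonneg (sub_nonneg.2 hcb) (sub_nonneg.2 hxy)]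

lemma Rs_of_lt_one {a P1 P2 : ℝ} (ha1 : a < 1) (hP2 : 0 ≤ P2) :
    Rs a P1 P2 = if P2 < P1 then g (P1 / (1 + a * P2)) - g (a * P1 / (1 + P2))
      else g P1 - g (a * P1) := by
  rw [Rs, if_neg (by linarith), if_neg ha1.not_ge]

lemma Rs_monotoneOn_Icc_of_lt_one {a P2 : ℝ} (ha0 : 0 ≤ a) (ha1 : a < 1) (hP2 : 0 ≤ P2) :
    MonotoneOn (fun P1 => Rs a P1 P2) (Icc 0 P2) := by
  refine (g_mul_sub_g_mul_monotoneOn (b := 1) ha0 ha1.le).mono Icc_subset_Ici_self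
    |>.congr fun x hx => ?_
  dsimp only
  rw [Rs_of_lt_one ha1 hP2, if_neg hx.2.not_gt, one_mul]

lemma Rs_monotoneOn_Ici_of_lt_one {a P2 : ℝ} (ha0 : 0 ≤ a) (ha1 : a < 1) (hP2 : 0 ≤ P2) :
    MonotoneOn (fun P1 => Rs a P1 P2) (Ici P2) := by
  have h1 : 0 < 1 + P2 := by linarith
  have h2 : 0 < 1 + a * P2 := by positivity
  have hcb : a / (1 + P2) ≤ 1 / (1 + a * P2) := by
    rw [div_le_div_iff₀ h1 h2]
    nlinarith [mul_nonneg ha0 hP2, mul_nonneg (mul_nonneg ha0 hP2) (sub_nonneg.2 ha1.le)]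
  refine (g_mul_sub_g_mul_monotoneOn (by positivity) hcb).mono (Ici_subset_Ici.2 hP2)
    |>.congr fun x hx => ?_
  dsimp only
  rcases (mem_Ici.1 hx).lt_or_eq with hlt | rfl
  · rw [Rs_of_lt_one ha1 hP2, if_pos hlt]
    field_simp
  · rw [Rs_of_lt_one ha1 hP2, if_neg (lt_irrefl _), g_sub_g (by positivity) (by positivity),
      g_sub_g h1 (by positivity)]
    congr 2
    field_simp
    ring

/-- For `0 < a < 1` the secrecy rate is monotone nondecreasing in the
transmitter power: the transmitter should use full power. -/
theorem Rs_monotoneOn_P1_weak (a P2 : ℝ) (ha0 : 0 < a) (ha1 : a < 1)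
    (hP2 : 0 ≤ P2) :
    MonotoneOn (fun P1 : ℝ => Rs a P1 P2) (Set.Ici 0) := by
  rw [← Icc_union_Ici_eq_Ici hP2]
  exact (Rs_monotoneOn_Icc_of_lt_one ha0.le ha1 hP2).union_right
    (Rs_monotoneOn_Ici_of_lt_one ha0.le ha1 hP2) (isGreatest_Icc hP2) isLeast_Ici
end

section
/- (Power control, strong interference.) Let a ≥ 1 and let P̄1 ≥ 0, P̄2 > a − 1 be power constraints. Then for all P1 with 0 ≤ P1 ≤ P̄1 and all P2 with 0 ≤ P2 ≤ P̄2, R_s(a, P1, P2) ≤ R_s(a, min(P̄1, a−1), P̄2); that is, the secrecy rate is maximized by the power allocation (min{P̄1, a−1}, P̄2). -/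
lemma g_zero : g 0 = 0 := by simp [g]

lemma g_le_g {u v : ℝ} (hu : -1 < u) (huv : u ≤ v) : g u ≤ g v := by
  unfold g
  gcongr
  · norm_num
  · linarith

lemma g_sub_g_le_g_sub_g {u v u' v' : ℝ} (hu : -1 < u) (hv : -1 < v) (hu' : -1 < u')
    (hv' : -1 < v') (h : (1 + u) * (1 + v') ≤ (1 + u') * (1 + v)) :
    g u - g v ≤ g u' - g v' := by
  have hlog : Real.logb 2 ((1 + u) * (1 + v')) ≤ Real.logb 2 ((1 + u') * (1 + v)) :=
    Real.logb_le_logb_of_le one_lt_two (by nlinarith) h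
  rw [Real.logb_mul (by linarith) (by linarith), Real.logb_mul (by linarith) (by linarith)] at hlog
  unfold g
  linarith

lemma g_sub_g_eq_g_sub_g {u v u' v' : ℝ} (hu : -1 < u) (hv : -1 < v) (hu' : -1 < u')
    (hv' : -1 < v') (h : (1 + u) * (1 + v') = (1 + u') * (1 + v)) :
    g u - g v = g u' - g v' :=
  le_antisymm (g_sub_g_le_g_sub_g hu hv hu' hv' h.le) (g_sub_g_le_g_sub_g hu' hv' hu hv h.ge)

noncomputable def lowPowerRate (a P1 P2 : ℝ) : ℝ := g P1 - g (a * P1 / (1 + P2))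

noncomputable def highPowerRate (a P1 P2 : ℝ) : ℝ := g (P1 + a * P2) - g (a * P1 + P2)

section Rates

variable {a P1 Q1 P2 Q2 : ℝ}

lemma lowPowerRate_zero_left (a P2 : ℝ) : lowPowerRate a 0 P2 = 0 := by
  simp [lowPowerRate, g_zero]

lemma lowPowerRate_mono_right (ha : 0 ≤ a) (hP1 : 0 ≤ P1) (hP2 : 0 ≤ P2) (hPQ : P2 ≤ Q2) :
    lowPowerRate a P1 P2 ≤ lowPowerRate a P1 Q2 := by
  have hQ2 : 0 ≤ Q2 := hP2.trans hPQ
  have hv : a * P1 / (1 + Q2) ≤ a * P1 / (1 + P2) := by gcongr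
  have := g_le_g (by linarith [show 0 ≤ a * P1 / (1 + Q2) by positivity]) hv
  unfold lowPowerRate
  linarith

lemma lowPowerRate_mono_left (ha : 0 ≤ a) (hP1 : 0 ≤ P1) (hPQ : P1 ≤ Q1) (hP2 : 0 ≤ P2)
    (haP2 : a ≤ 1 + P2) : lowPowerRate a P1 P2 ≤ lowPowerRate a Q1 P2 := by
  have hP2' : 0 < 1 + P2 := by linarith
  have hvP : 0 ≤ a * P1 / (1 + P2) := by positivity
  have hvQ : 0 ≤ a * Q1 / (1 + P2) := div_nonneg (mul_nonneg ha (hP1.trans hPQ)) hP2'.le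
  apply g_sub_g_le_g_sub_g (by linarith) (by linarith) (by linarith) (by linarith)
  rw [one_add_div hP2'.ne', one_add_div hP2'.ne', ← mul_div_assoc, ← mul_div_assoc,
    div_le_div_iff_of_pos_right hP2']
  nlinarith [mul_nonneg (sub_nonneg.2 hPQ) (sub_nonneg.2 haP2)]

lemma highPowerRate_mono_right (ha : 1 ≤ a) (hP1 : 0 ≤ P1) (hP2 : 0 ≤ P2) (hPQ : P2 ≤ Q2) :
    highPowerRate a P1 P2 ≤ highPowerRate a P1 Q2 := by
  apply g_sub_g_le_g_sub_g (by nlinarith) (by nlinarith) (by nlinarith) (by nlinarith)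
  have : 0 ≤ (Q2 - P2) * (a - 1) * (1 + (a + 1) * P1) := by
    have : 0 ≤ a - 1 := by linarith
    have : 0 ≤ Q2 - P2 := by linarith
    positivity
  nlinarith

lemma highPowerRate_anti_left (ha : 1 ≤ a) (hP1 : 0 ≤ P1) (hPQ : P1 ≤ Q1) (hP2 : 0 ≤ P2) :
    highPowerRate a Q1 P2 ≤ highPowerRate a P1 P2 := by
  apply g_sub_g_le_g_sub_g (by nlinarith) (by nlinarith) (by nlinarith) (by nlinarith)
  have : 0 ≤ (Q1 - P1) * (a - 1) * (1 + (a + 1) * P2) := by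
    have : 0 ≤ a - 1 := by linarith
    have : 0 ≤ Q1 - P1 := by linarith
    positivity
  nlinarith

lemma lowPowerRate_sub_one_eq (ha : 1 ≤ a) (hP2 : 0 ≤ P2) :
    lowPowerRate a (a - 1) P2 = highPowerRate a (a - 1) P2 := by
  have ha' : 0 ≤ a - 1 := by linarith
  have hv : 0 ≤ a * (a - 1) / (1 + P2) := by positivity
  apply g_sub_g_eq_g_sub_g (by linarith) (by linarith) (by nlinarith) (by nlinarith)
  field_simp
  ring

end Rates

lemma Rs_eq_lowPowerRate {a P1 P2 : ℝ} (ha : 1 ≤ a) (haP2 : a < 1 + P2) (hP1 : P1 ≤ a - 1) :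
    Rs a P1 P2 = lowPowerRate a P1 P2 := by
  rw [Rs, if_neg haP2.not_ge, if_pos ha]
  rcases hP1.lt_or_eq with hlt | rfl
  · rw [if_pos ⟨by linarith, by linarith⟩]
    rfl
  · rw [if_neg (by rintro ⟨-, h⟩; linarith), if_pos ⟨by linarith, by linarith⟩,
      lowPowerRate_sub_one_eq ha (by linarith)]
    rfl

lemma Rs_le_lowPowerRate_min {a P1 P2 Q2 : ℝ} (ha : 1 ≤ a) (haQ2 : a ≤ 1 + Q2) (hP1 : 0 ≤ P1)
    (hP2 : 0 ≤ P2) (hPQ : P2 ≤ Q2) : Rs a P1 P2 ≤ lowPowerRate a (min P1 (a - 1)) Q2 := by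
  have ha' : 0 ≤ a - 1 := by linarith
  have hQ2 : 0 ≤ Q2 := hP2.trans hPQ
  have hmin : 0 ≤ min P1 (a - 1) := le_min hP1 ha'
  have hnonneg : 0 ≤ lowPowerRate a (min P1 (a - 1)) Q2 :=
    lowPowerRate_zero_left a Q2 ▸ lowPowerRate_mono_left (by linarith) le_rfl hmin hQ2 haQ2
  rw [Rs, if_pos ha]
  split_ifs with hzero hlow hhigh
  · exact hnonneg
  · rw [min_eq_left (by linarith [hlow.2])]
    exact lowPowerRate_mono_right (by linarith) hP1 hP2 hPQ
  · rw [min_eq_right (by linarith [hhigh.2]), lowPowerRate_sub_one_eq ha hQ2]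
    calc highPowerRate a P1 P2 ≤ highPowerRate a (a - 1) P2 :=
          highPowerRate_anti_left ha ha' (by linarith [hhigh.2]) hP2
      _ ≤ highPowerRate a (a - 1) Q2 := highPowerRate_mono_right ha ha' hP2 hPQ
  · exact hnonneg

theorem powerControl_strong_general (a Pbar1 Pbar2 : ℝ) (ha : 1 ≤ a)
    (hP2 : a - 1 < Pbar2) :
    ∀ P1 P2 : ℝ, 0 ≤ P1 → P1 ≤ Pbar1 → 0 ≤ P2 → P2 ≤ Pbar2 →
      Rs a P1 P2 ≤ Rs a (min Pbar1 (a - 1)) Pbar2 := by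
  intro P1 P2 hP1 hP1Pbar hP2₀ hP2Pbar
  calc Rs a P1 P2 ≤ lowPowerRate a (min P1 (a - 1)) Pbar2 :=
        Rs_le_lowPowerRate_min ha (by linarith) hP1 hP2₀ hP2Pbar
    _ ≤ lowPowerRate a (min Pbar1 (a - 1)) Pbar2 :=
        lowPowerRate_mono_left (by linarith) (le_min hP1 (by linarith))
          (min_le_min_right _ hP1Pbar) (by linarith) (by linarith)
    _ = Rs a (min Pbar1 (a - 1)) Pbar2 :=
        (Rs_eq_lowPowerRate ha (by linarith) (min_le_right _ _)).symm

/-- Power control, strong interference: for `a ≥ 1` and `P̄2 > a - 1`,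
the secrecy rate is maximized by the allocation `(min P̄1 (a-1), P̄2)`. -/
theorem powerControl_strong (a Pbar1 Pbar2 : ℝ) (ha : 1 ≤ a)
    (hP1 : 0 ≤ Pbar1) (hP2 : a - 1 < Pbar2) :
    ∀ P1 P2 : ℝ, 0 ≤ P1 → P1 ≤ Pbar1 → 0 ≤ P2 → P2 ≤ Pbar2 →
      Rs a P1 P2 ≤ Rs a (min Pbar1 (a - 1)) Pbar2 :=
  powerControl_strong_general a Pbar1 Pbar2 ha hP2
end

section
/- (Power control, weak interference.) Let 0 < a < 1 and let P̄1 > 0, P̄2 ≥ 0 be power constraints, and set P2* := (√(1 + (1+a)·P̄1) − 1)/(1+a). Then for all P1 with 0 ≤ P1 ≤ P̄1 and all P2 with 0 ≤ P2 ≤ P̄2, R_s(a, P1, P2) ≤ R_s(a, P̄1, min(P̄2, P2*)); that is, the secrecy rate is maximized by the power allocation (P̄1, min{P̄2, P2*}). -/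
/-!
For `a < 1` and nonnegative powers, `Rs a P t` is half the binary logarithm of
`((1 + P + a t)(1 + t)) / ((1 + a t)(1 + t + a P))`, with the helper's power `t` replaced by `0`
when it is at least `P`. This ratio increases with the signal power `P`. As a function of `t` its
increments have the sign of `(t - s)(P - s - t - (1 + a) s t)`, so it is unimodal with peak at the
positive root `τ` of `(1 + a) τ² + 2 τ = P`; under the constraint `t ≤ P̄₂` the best choice is
`min P̄₂ τ`.
-/

open Real

noncomputable def secrecyRatio (a P t : ℝ) : ℝ :=
  ((1 + P + a * t) * (1 + t)) / ((1 + a * t) * (1 + t + a * P))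

noncomputable def optimalJamPower (a P : ℝ) : ℝ :=
  (√(1 + (1 + a) * P) - 1) / (1 + a)

section secrecyRatio

variable {a P P' s t : ℝ}

lemma secrecyRatio_pos (ha : 0 ≤ a) (hP : 0 ≤ P) (ht : 0 ≤ t) : 0 < secrecyRatio a P t := by
  unfold secrecyRatio; positivity

lemma g_sub_g_eq_logb_secrecyRatio (ha : 0 ≤ a) (hP : 0 ≤ P) (ht : 0 ≤ t) :
    g (P / (1 + a * t)) - g (a * P / (1 + t)) = 1 / 2 * logb 2 (secrecyRatio a P t) := by
  have hX : 1 + P / (1 + a * t) ≠ 0 := by positivity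
  have hY : 1 + a * P / (1 + t) ≠ 0 := by positivity
  rw [g, g, ← mul_sub, ← logb_div hX hY, secrecyRatio]
  congr 2
  field_simp
  ring

lemma secrecyRatio_sub_secrecyRatio_left (ha : 0 ≤ a) (hP : 0 ≤ P) (hP' : 0 ≤ P') (ht : 0 ≤ t) :
    secrecyRatio a P' t - secrecyRatio a P t =
      (1 - a) * (1 + t) * (1 + (1 + a) * t) * (P' - P) /
        ((1 + a * t) * (1 + t + a * P) * (1 + t + a * P')) := by
  unfold secrecyRatio
  field_simp
  ring

lemma secrecyRatio_mono_left (ha0 : 0 ≤ a) (ha1 : a ≤ 1) (hP : 0 ≤ P) (hPP' : P ≤ P')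
    (ht : 0 ≤ t) : secrecyRatio a P t ≤ secrecyRatio a P' t := by
  have hP' : 0 ≤ P' := hP.trans hPP'
  rw [← sub_nonneg, secrecyRatio_sub_secrecyRatio_left ha0 hP hP' ht]
  have : 0 ≤ 1 - a := by linarith
  have : 0 ≤ P' - P := by linarith
  positivity

lemma secrecyRatio_sub_secrecyRatio_right (ha : 0 ≤ a) (hP : 0 ≤ P) (hs : 0 ≤ s) (ht : 0 ≤ t) :
    secrecyRatio a P t - secrecyRatio a P s =
      a * (1 - a) * P * ((t - s) * (P - s - t - (1 + a) * s * t)) /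
        ((1 + a * s) * (1 + s + a * P) * (1 + a * t) * (1 + t + a * P)) := by
  unfold secrecyRatio
  field_simp
  ring

lemma secrecyRatio_le_secrecyRatio_right (ha0 : 0 ≤ a) (ha1 : a ≤ 1) (hP : 0 ≤ P) (hs : 0 ≤ s)
    (ht : 0 ≤ t) (hsign : 0 ≤ (t - s) * (P - s - t - (1 + a) * s * t)) :
    secrecyRatio a P s ≤ secrecyRatio a P t := by
  rw [← sub_nonneg, secrecyRatio_sub_secrecyRatio_right ha0 hP hs ht]
  have : 0 ≤ 1 - a := by linarith
  positivity

end secrecyRatio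

section optimalJamPower

variable {a P : ℝ}

lemma optimalJamPower_nonneg (ha : 0 ≤ a) (hP : 0 ≤ P) : 0 ≤ optimalJamPower a P := by
  have : 1 ≤ √(1 + (1 + a) * P) := one_le_sqrt.2 (by nlinarith)
  unfold optimalJamPower
  exact div_nonneg (by linarith) (by linarith)

lemma optimalJamPower_quadratic (ha : 0 ≤ a) (hP : 0 ≤ P) :
    (1 + a) * optimalJamPower a P ^ 2 + 2 * optimalJamPower a P = P := by
  have hsq : √(1 + (1 + a) * P) ^ 2 = 1 + (1 + a) * P := sq_sqrt (by nlinarith)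
  unfold optimalJamPower
  field_simp
  linear_combination hsq

lemma optimalJamPower_lt (ha : 0 ≤ a) (hP : 0 < P) : optimalJamPower a P < P := by
  have hτ := optimalJamPower_nonneg ha hP.le
  have hq := optimalJamPower_quadratic ha hP.le
  nlinarith

end optimalJamPower

/-- Either `t ≤ min B τ ≤ τ`, and both factors are nonnegative, or `min B τ = τ < t`, and the
product is `(τ - t)² (1 + (1 + a) τ)`. -/
lemma sign_condition_min_root {a P B τ t : ℝ} (ha : 0 ≤ a) (hτ : 0 ≤ τ)
    (hq : (1 + a) * τ ^ 2 + 2 * τ = P) (ht : 0 ≤ t) (htB : t ≤ B) :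
    0 ≤ (min B τ - t) * (P - t - min B τ - (1 + a) * t * min B τ) := by
  have hQτ : min B τ ≤ τ := min_le_right B τ
  rcases le_or_gt t (min B τ) with htQ | hQt
  · have hQ0 : 0 ≤ min B τ := ht.trans htQ
    apply mul_nonneg (by linarith)
    nlinarith [mul_le_mul_of_nonneg_left htQ (mul_nonneg (by linarith : (0 : ℝ) ≤ 1 + a) hQ0),
      mul_le_mul hQτ hQτ hQ0 hτ]
  · have hQ : min B τ = τ := by
      refine min_eq_right (le_of_not_ge fun hBτ => ?_)
      rw [min_eq_left hBτ] at hQt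
      linarith
    rw [hQ, ← hq]
    have : 0 ≤ 1 + (1 + a) * τ := by positivity
    nlinarith [mul_nonneg (sq_nonneg (τ - t)) this]

lemma secrecyRatio_le_min_optimalJamPower {a P B t : ℝ} (ha0 : 0 ≤ a) (ha1 : a ≤ 1) (hP : 0 ≤ P)
    (ht : 0 ≤ t) (htB : t ≤ B) :
    secrecyRatio a P t ≤ secrecyRatio a P (min B (optimalJamPower a P)) := by
  have hτ := optimalJamPower_nonneg ha0 hP
  apply secrecyRatio_le_secrecyRatio_right ha0 ha1 hP ht (le_min (ht.trans htB) hτ)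
  exact sign_condition_min_root ha0 hτ (optimalJamPower_quadratic ha0 hP) ht htB

section Rs

variable {a P t : ℝ}

lemma Rs_eq_logb_secrecyRatio_of_lt (ha0 : 0 ≤ a) (ha1 : a < 1) (ht : 0 ≤ t) (htP : t < P) :
    Rs a P t = 1 / 2 * logb 2 (secrecyRatio a P t) := by
  rw [Rs, if_neg (by linarith), if_neg (by linarith), if_pos htP,
    g_sub_g_eq_logb_secrecyRatio ha0 (ht.trans htP.le) ht]

lemma exists_Rs_eq_logb_secrecyRatio (ha0 : 0 ≤ a) (ha1 : a < 1) (hP : 0 ≤ P) (ht : 0 ≤ t) :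
    ∃ s, 0 ≤ s ∧ s ≤ t ∧ Rs a P t = 1 / 2 * logb 2 (secrecyRatio a P s) := by
  by_cases htP : t < P
  · exact ⟨t, ht, le_rfl, Rs_eq_logb_secrecyRatio_of_lt ha0 ha1 ht htP⟩
  · refine ⟨0, le_rfl, ht, ?_⟩
    rw [Rs, if_neg (by linarith), if_neg (by linarith), if_neg htP,
      ← g_sub_g_eq_logb_secrecyRatio ha0 hP le_rfl]
    simp

end Rs

theorem powerControl_weak_general (a Pbar1 Pbar2 : ℝ) (ha0 : 0 < a) (ha1 : a < 1)
    (hP1 : 0 < Pbar1) :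
    ∀ P1 P2 : ℝ, 0 ≤ P1 → P1 ≤ Pbar1 → 0 ≤ P2 → P2 ≤ Pbar2 →
      Rs a P1 P2 ≤
        Rs a Pbar1 (min Pbar2 ((Real.sqrt (1 + (1 + a) * Pbar1) - 1) / (1 + a))) := by
  intro P1 P2 h1l h1u h2l h2u
  change Rs a P1 P2 ≤ Rs a Pbar1 (min Pbar2 (optimalJamPower a Pbar1))
  obtain ⟨t, ht0, htP2, hRs⟩ := exists_Rs_eq_logb_secrecyRatio ha0.le ha1 h1l h2l
  have htB : t ≤ Pbar2 := htP2.trans h2u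
  have hQ0 : 0 ≤ min Pbar2 (optimalJamPower a Pbar1) :=
    le_min (ht0.trans htB) (optimalJamPower_nonneg ha0.le hP1.le)
  have hQP : min Pbar2 (optimalJamPower a Pbar1) < Pbar1 :=
    (min_le_right _ _).trans_lt (optimalJamPower_lt ha0.le hP1)
  rw [hRs, Rs_eq_logb_secrecyRatio_of_lt ha0.le ha1 hQ0 hQP]
  gcongr
  · exact one_lt_two
  · exact secrecyRatio_pos ha0.le h1l ht0
  calc secrecyRatio a P1 t ≤ secrecyRatio a Pbar1 t :=
        secrecyRatio_mono_left ha0.le ha1.le h1l h1u ht0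
    _ ≤ secrecyRatio a Pbar1 (min Pbar2 (optimalJamPower a Pbar1)) :=
        secrecyRatio_le_min_optimalJamPower ha0.le ha1.le hP1.le ht0 htB

/-- Power control, weak interference: for `0 < a < 1`, the secrecy rate is
maximized by the allocation `(P̄1, min P̄2 P2*)`. -/
theorem powerControl_weak (a Pbar1 Pbar2 : ℝ) (ha0 : 0 < a) (ha1 : a < 1)
    (hP1 : 0 < Pbar1) (hP2 : 0 ≤ Pbar2) :
    ∀ P1 P2 : ℝ, 0 ≤ P1 → P1 ≤ Pbar1 → 0 ≤ P2 → P2 ≤ Pbar2 →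
      Rs a P1 P2 ≤
        Rs a Pbar1 (min Pbar2 ((Real.sqrt (1 + (1 + a) * Pbar1) - 1) / (1 + a))) :=
  powerControl_weak_general a Pbar1 Pbar2 ha0 ha1 hP1
end

section
/- Let a and P̄1, P̄2 be real numbers with 1 < a < 1 + P̄2 and P̄1 > 0. Then R_s(a, min(P̄1, a−1), P̄2) > 0; that is, with the power-control allocation (min{P̄1, a−1}, P̄2) a strictly positive secrecy rate is achievable whenever 1 < a < 1 + P̄2, even though the secrecy capacity of the Gaussian wiretap channel without the interferer is zero for a ≥ 1. -/
/-! The power-control allocation only matters through `0 < min P̄1 (a - 1) ≤ a - 1 < P̄2`: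
in the regime `1 < a < 1 + P2`, every power `0 < P1 < P2` gives a positive rate. If
`1 + P1 < a` the rate is `g P1 - g (a P1 / (1 + P2))`, positive because `a < 1 + P2`;
otherwise it is `g (P1 + a P2) - g (a P1 + P2)`, positive because
`(P1 + a P2) - (a P1 + P2) = (a - 1) (P2 - P1) > 0`. -/

lemma g_strictMonoOn : StrictMonoOn g (Set.Ioi (-1)) := by
  intro x hx y _ hxy
  have hlog := Real.logb_lt_logb one_lt_two (by linarith [Set.mem_Ioi.mp hx] : (0 : ℝ) < 1 + x)
    (by linarith : 1 + x < 1 + y)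
  unfold g
  linarith

lemma sub_g_pos {x y : ℝ} (hx : 0 ≤ x) (hxy : x < y) : 0 < g y - g x :=
  sub_pos.mpr <| g_strictMonoOn (Set.mem_Ioi.mpr (by linarith)) (Set.mem_Ioi.mpr (by linarith)) hxy

theorem Rs_pos_of_lt {a P1 P2 : ℝ} (ha : 1 < a) (hP2 : a < 1 + P2) (hP1 : 0 < P1)
    (hP12 : P1 < P2) : 0 < Rs a P1 P2 := by
  unfold Rs
  rw [if_neg hP2.not_ge, if_pos ha.le]
  by_cases hstrong : 1 + P1 < a
  · rw [if_pos ⟨hP12, hstrong⟩]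
    have hP2pos : 0 < 1 + P2 := by linarith
    refine sub_g_pos (by positivity) ?_
    rw [div_lt_iff₀ hP2pos]
    nlinarith
  · rw [if_neg (fun h => hstrong h.2), if_pos ⟨hP12, not_lt.mp hstrong⟩]
    exact sub_g_pos (by nlinarith) (by nlinarith)

/-- For `1 < a < 1 + P̄2` and `P̄1 > 0`, the power-control allocation
`(min P̄1 (a-1), P̄2)` achieves a strictly positive secrecy rate. -/
theorem positive_rate_strong (a Pbar1 Pbar2 : ℝ) (ha : 1 < a)
    (hP2 : a < 1 + Pbar2) (hP1 : 0 < Pbar1) :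
    0 < Rs a (min Pbar1 (a - 1)) Pbar2 :=
  Rs_pos_of_lt ha hP2 (lt_min hP1 (sub_pos.mpr ha))
    ((min_le_right _ _).trans_lt (by linarith))
end

section
/- (Helper never hurts in weak interference.) Let 0 < a < 1 and let P̄1 > 0, P̄2 ≥ 0, and set P2* := (√(1 + (1+a)·P̄1) − 1)/(1+a). Then R_s(a, P̄1, min(P̄2, P2*)) ≥ g(P̄1) − g(a·P̄1); that is, the power-controlled secrecy rate with the helping interferer is at least the secrecy capacity g(P̄1) − g(aP̄1) of the Gaussian wiretap channel without the interferer. -/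
/-!
In weak interference any helper power `P2 ≥ 0` already does no harm, so the power control
`min P̄2 P2*` only matters through `P2* ≥ 0`. When `P2 ≥ P1` the rate is the wiretap capacity
itself. When `P2 < P1`, moving the negative terms across and combining logarithms, the comparison
of the two rates amounts to
`(1 + P1) (1 + a P1 / (1 + P2)) ≤ (1 + P1 / (1 + a P2)) (1 + a P1)`, and clearing denominators
the gap between the two sides is `a (1 - a) P1 P2 (P1 - P2) ≥ 0`.
-/

lemma g_add_g_le_g_add_g {x y u v : ℝ} (hx : 0 < 1 + x) (hy : 0 < 1 + y)
    (h : (1 + x) * (1 + y) ≤ (1 + u) * (1 + v)) :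
    g x + g y ≤ g u + g v := by
  have hprod : 0 < (1 + u) * (1 + v) := (mul_pos hx hy).trans_le h
  have hlog := Real.logb_le_logb_of_le one_lt_two (mul_pos hx hy) h
  rw [Real.logb_mul hx.ne' hy.ne',
    Real.logb_mul (left_ne_zero_of_mul hprod.ne') (right_ne_zero_of_mul hprod.ne')] at hlog
  simp only [g]
  linarith

lemma one_add_mul_one_add_div_le {a P1 P2 : ℝ} (ha0 : 0 ≤ a) (ha1 : a ≤ 1)
    (hP2 : 0 ≤ P2) (hP21 : P2 ≤ P1) :
    (1 + P1) * (1 + a * P1 / (1 + P2)) ≤ (1 + P1 / (1 + a * P2)) * (1 + a * P1) := by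
  have hq : 0 < 1 + P2 := by linarith
  have haq : 0 < 1 + a * P2 := by positivity
  rw [one_add_div hq.ne', one_add_div haq.ne', mul_div_assoc', div_mul_eq_mul_div,
    div_le_div_iff₀ hq haq]
  have hgap : 0 ≤ a * (1 - a) * P1 * P2 * (P1 - P2) := by
    have := hP2.trans hP21
    have := sub_nonneg.2 ha1
    have := sub_nonneg.2 hP21
    positivity
  linear_combination hgap

theorem wiretap_capacity_le_Rs_of_lt_one {a P1 P2 : ℝ} (ha0 : 0 ≤ a) (ha1 : a < 1)
    (hP2 : 0 ≤ P2) :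
    g P1 - g (a * P1) ≤ Rs a P1 P2 := by
  rw [Rs, if_neg (by linarith), if_neg (by linarith)]
  split_ifs with hP21
  · have hP1 : 0 ≤ P1 := hP2.trans hP21.le
    have hsum : g P1 + g (a * P1 / (1 + P2)) ≤ g (P1 / (1 + a * P2)) + g (a * P1) :=
      g_add_g_le_g_add_g (by linarith) (by positivity)
        (one_add_mul_one_add_div_le ha0 ha1.le hP2 hP21.le)
    linarith
  · exact le_rfl

/-- Helper never hurts in weak interference: the power-controlled secrecy
rate with the helping interferer is at least the secrecy capacity
`g P̄1 - g (a P̄1)` of the Gaussian wiretap channel without interferer. -/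
theorem helper_never_hurts (a Pbar1 Pbar2 : ℝ) (ha0 : 0 < a) (ha1 : a < 1)
    (hP1 : 0 < Pbar1) (hP2 : 0 ≤ Pbar2) :
    g Pbar1 - g (a * Pbar1) ≤
      Rs a Pbar1 (min Pbar2 ((Real.sqrt (1 + (1 + a) * Pbar1) - 1) / (1 + a))) := by
  have hsqrt : 1 ≤ Real.sqrt (1 + (1 + a) * Pbar1) :=
    Real.one_le_sqrt.2 (by nlinarith)
  have hP2star : 0 ≤ (Real.sqrt (1 + (1 + a) * Pbar1) - 1) / (1 + a) :=
    div_nonneg (by linarith) (by linarith)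
  exact wiretap_capacity_le_Rs_of_lt_one ha0.le ha1 (le_min hP2 hP2star)
end

section
/- (Power-unconstrained secrecy rate, strong interference.) Let a > 1 be a real number. For P̄ ≥ 0 define S(P̄) := sup { R_s(a, P1, P2) : 0 ≤ P1 ≤ P̄, 0 ≤ P2 ≤ P̄ }. Then S(P̄) tends to (1/2)·log₂ a as P̄ → ∞. -/
open Filter

open Topology Real

lemma tendsto_add_mul_div_add_atTop (α β γ : ℝ) :
    Tendsto (fun x : ℝ => (α + γ * x) / (β + x)) atTop (𝓝 γ) := by
  have hinv : Tendsto (fun x : ℝ => (β + x)⁻¹) atTop (𝓝 0) :=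
    (tendsto_atTop_add_const_left _ β tendsto_id).inv_tendsto_atTop
  have hlim := (hinv.const_mul (α - γ * β)).const_add γ
  rw [mul_zero, add_zero] at hlim
  refine hlim.congr' ?_
  filter_upwards [eventually_gt_atTop (-β)] with x hx
  have : β + x ≠ 0 := by linarith
  field_simp
  ring

lemma g_sub_g_s16 (x y : ℝ) : g x - g y = (1/2) * (logb 2 (1 + x) - logb 2 (1 + y)) := by
  unfold g; ring

lemma g_sub_g_le_half_logb {a x y : ℝ} (hx : -1 < x) (hy : -1 < y) (h : 1 + x ≤ a * (1 + y)) :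
    g x - g y ≤ (1/2) * logb 2 a := by
  have ha : 0 < a := pos_of_mul_pos_left (by linarith) (by linarith : (0 : ℝ) ≤ 1 + y)
  have hlog : logb 2 (1 + x) ≤ logb 2 a + logb 2 (1 + y) := by
    rw [← logb_mul ha.ne' (by linarith)]
    exact logb_le_logb_of_le one_lt_two (by linarith) h
  rw [g_sub_g_s16]
  linarith

lemma Rs_le_half_logb {a P1 P2 : ℝ} (ha : 1 < a) (hP1 : 0 ≤ P1) (hP2 : 0 ≤ P2) :
    Rs a P1 P2 ≤ (1/2) * logb 2 a := by
  have hL : 0 ≤ (1/2) * logb 2 a := by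
    have := logb_nonneg one_lt_two ha.le
    positivity
  unfold Rs
  split_ifs with h_weak h_one h_small h_large
  · exact hL
  · have hy : 0 ≤ a * P1 / (1 + P2) := by positivity
    exact g_sub_g_le_half_logb (by linarith) (by linarith) (by nlinarith)
  · have hgain : 0 ≤ (a ^ 2 - 1) * P1 := mul_nonneg (by nlinarith) hP1
    exact g_sub_g_le_half_logb (by nlinarith) (by nlinarith) (by nlinarith)
  · exact hL
  all_goals linarith

lemma Rs_sub_one_eq {a P : ℝ} (ha : 1 < a) (hP : a - 1 < P) :
    Rs a (a - 1) P = (1/2) * logb 2 ((a + a * P) / (a ^ 2 - a + 1 + P)) := by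
  have hRs : Rs a (a - 1) P = g (a - 1 + a * P) - g (a * (a - 1) + P) := by
    unfold Rs
    rw [if_neg (by linarith), if_pos ha.le, if_neg (by intro h; linarith [h.2]),
      if_pos ⟨hP, by linarith⟩]
  rw [hRs, g_sub_g_s16, logb_div (by nlinarith) (by nlinarith)]
  ring_nf

lemma tendsto_Rs_sub_one {a : ℝ} (ha : 1 < a) :
    Tendsto (fun P : ℝ => Rs a (a - 1) P) atTop (𝓝 ((1/2) * logb 2 a)) := by
  have hratio := tendsto_add_mul_div_add_atTop a (a ^ 2 - a + 1) a
  refine ((hratio.logb (by positivity)).const_mul (1/2)).congr' ?_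
  filter_upwards [eventually_gt_atTop (a - 1)] with P hP
  rw [Rs_sub_one_eq ha hP]

/-- Power-unconstrained secrecy rate, strong interference: the supremum of
the secrecy rate over powers bounded by `P̄` tends to `(1/2) log₂ a`. -/
theorem power_unconstrained_strong (a : ℝ) (ha : 1 < a) :
    Tendsto
      (fun Pbar : ℝ =>
        sSup {r : ℝ | ∃ P1 P2 : ℝ, 0 ≤ P1 ∧ P1 ≤ Pbar ∧ 0 ≤ P2 ∧ P2 ≤ Pbar ∧
          r = Rs a P1 P2})
      atTop (nhds ((1/2) * Real.logb 2 a)) := by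
  have hbound : ∀ Pbar : ℝ, ∀ r ∈ {r : ℝ | ∃ P1 P2 : ℝ, 0 ≤ P1 ∧ P1 ≤ Pbar ∧ 0 ≤ P2 ∧
      P2 ≤ Pbar ∧ r = Rs a P1 P2}, r ≤ (1/2) * logb 2 a := by
    rintro Pbar r ⟨P1, P2, hP1, -, hP2, -, rfl⟩
    exact Rs_le_half_logb ha hP1 hP2
  refine tendsto_of_tendsto_of_tendsto_of_le_of_le' (tendsto_Rs_sub_one ha)
    tendsto_const_nhds ?_ ?_
  · filter_upwards [eventually_ge_atTop (a - 1)] with Pbar hPbar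
    exact le_csSup ⟨_, hbound Pbar⟩
      ⟨a - 1, Pbar, by linarith, hPbar, by linarith, le_rfl, rfl⟩
  · filter_upwards [eventually_ge_atTop 0] with Pbar hPbar
    exact csSup_le ⟨_, 0, 0, le_rfl, hPbar, le_rfl, hPbar, rfl⟩ (hbound Pbar)
end
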